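/- Let (X, τ) be a topological space and let F be a nonempty proper closed subset of X (F ≠ ∅, F ≠ X). Then the complement X \ F is both open and closed in the sharp topology τ^♯ associated to the principal ideal I(F); in particular, (X, τ^♯) is disconnected. -/

import Mathlib

open Set

def IsIdeal {X : Type*} (I : Set (Set X)) : Prop :=
  I.Nonempty ∧ (∀ A B : Set X, A ∈ I → B ⊆ A → B ∈ I) ∧
    (∀ A B : Set X, A ∈ I → B ∈ I → A ∪ B ∈ I)

def IsMaximalIdeal {X : Type*} (I : Set (Set X)) : Prop :=
  IsIdeal I ∧ I ≠ Set.univ ∧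
    ∀ J : Set (Set X), IsIdeal J → I ⊆ J → J = I ∨ J = Set.univ

def IsMinimalIdeal {X : Type*} (I : Set (Set X)) : Prop :=
  IsIdeal I ∧ I ≠ {∅} ∧ I ≠ Set.univ ∧
    ∀ J : Set (Set X), IsIdeal J → J ⊆ I → J = I ∨ J = {∅}

def Ann {X : Type*} (J : Set (Set X)) : Set (Set X) :=
  {A | ∀ B ∈ J, A ∩ B = ∅}

def idealQuot {X : Type*} (I J : Set (Set X)) : Set (Set X) :=
  {A | ∀ B ∈ J, A ∩ B ∈ I}

def localFn {X : Type*} [TopologicalSpace X] (I : Set (Set X)) (A : Set X) : Set X :=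
  {x | ∀ U : Set X, IsOpen U → x ∈ U → U ∩ A ∉ I}

def sharpFn {X : Type*} [TopologicalSpace X] (I : Set (Set X)) (A : Set X) : Set X :=
  {x | ∀ U : Set X, IsOpen U → x ∈ U → ∃ J ∈ I, J.Nonempty ∧ J ⊆ U ∩ A}

def starTop {X : Type*} (τ : TopologicalSpace X) (I : Set (Set X)) : TopologicalSpace X :=
  TopologicalSpace.generateFrom {A | @localFn X τ I Aᶜ ⊆ Aᶜ}

def sharpTop {X : Type*} (τ : TopologicalSpace X) (I : Set (Set X)) : TopologicalSpace X :=
  TopologicalSpace.generateFrom {A | @localFn X τ (Ann I) Aᶜ ⊆ Aᶜ}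

open Topology

theorem empty_mem_ann {X : Type*} (J : Set (Set X)) : ∅ ∈ Ann J :=
  fun _ _ => empty_inter _

theorem compl_mem_ann_principal {X : Type*} (F : Set X) : Fᶜ ∈ Ann {B : Set X | B ⊆ F} :=
  fun _ hB => disjoint_iff_inter_eq_empty.mp (disjoint_compl_left.mono_right hB)

section localFn

variable {X : Type*} [TopologicalSpace X]

theorem localFn_eq_empty_of_mem {I : Set (Set X)} {A : Set X} (hA : A ∈ I) :
    localFn I A = ∅ :=
  eq_empty_of_forall_notMem fun _ hx => hx univ isOpen_univ trivial (by rwa [univ_inter])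

theorem localFn_subset_closure {I : Set (Set X)} (hI : ∅ ∈ I) (A : Set X) :
    localFn I A ⊆ closure A := by
  intro x hx
  by_contra hxA
  refine hx (closure A)ᶜ isClosed_closure.isOpen_compl hxA ?_
  rwa [disjoint_iff_inter_eq_empty.mp (disjoint_compl_left.mono_right subset_closure)]

end localFn

section sharpTop

variable {X : Type*} (τ : TopologicalSpace X)

theorem isOpen_sharpTop_of_isOpen (I : Set (Set X)) {U : Set X} (hU : IsOpen U) :
    IsOpen[sharpTop τ I] U := by
  refine TopologicalSpace.isOpen_generateFrom_of_mem ?_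
  show localFn (Ann I) Uᶜ ⊆ Uᶜ
  simpa only [hU.isClosed_compl.closure_eq] using localFn_subset_closure (empty_mem_ann I) Uᶜ

theorem isOpen_sharpTop_principal (F : Set X) : IsOpen[sharpTop τ {B : Set X | B ⊆ F}] F := by
  refine TopologicalSpace.isOpen_generateFrom_of_mem ?_
  show localFn (Ann {B : Set X | B ⊆ F}) Fᶜ ⊆ Fᶜ
  simp only [localFn_eq_empty_of_mem (compl_mem_ann_principal F), empty_subset]

end sharpTop

theorem stmt19 {X : Type*} [τ : TopologicalSpace X] (F : Set X)
    (hF : IsClosed F) (hne : F ≠ ∅) (hprop : F ≠ Set.univ) :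
    @IsOpen X (sharpTop τ {B : Set X | B ⊆ F}) Fᶜ ∧
      @IsClosed X (sharpTop τ {B : Set X | B ⊆ F}) Fᶜ ∧
      ¬ @ConnectedSpace X (sharpTop τ {B : Set X | B ⊆ F}) := by
  let τs := sharpTop τ {B : Set X | B ⊆ F}
  have hopen : IsOpen[τs] Fᶜ := isOpen_sharpTop_of_isOpen τ _ hF.isOpen_compl
  have hclosed : IsClosed[τs] Fᶜ :=
    (isOpen_sharpTop_principal τ F).isClosed_compl
  refine ⟨hopen, hclosed, fun hconn => ?_⟩
  rcases (@isClopen_iff X τs hconn.toPreconnectedSpace Fᶜ).mp ⟨hclosed, hopen⟩ with h | h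
  · exact hprop (compl_empty_iff.mp h)
  · exact hne (compl_univ_iff.mp h)
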